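/- Fix an integer r ≥ 1 and an integer n ≥ 1. Let d be a nonidentity element of the image of the homomorphism F(d₁,d₂) → G_cd (sending d₁, d₂ to the generators d₁, d₂). Let r₀, r₁, …, r_{n−1}, r_{n+1} and s₁, …, s_n be integers with s₁, …, s_n all nonzero and r₁, …, r_{n−1} all nonzero (r₀ and r_{n+1} arbitrary). Then the element d·c₁^{r₀}·(∏_{i=1}^{n−1} c₂^{sᵢ}c₁^{rᵢ})·c₂^{s_n}·c₁^{r_{n+1}} is not the identity in G_cd. -/

import Mathlib

/-- The "progression word" `x y^(s+1) x y^(s+2) ⋯ x y^(s+r)` in a group. -/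
def wordProg {G : Type*} [Group G] (x y : G) (s r : ℕ) : G :=
  ((List.range r).map (fun k => x * y ^ (s + k + 1))).prod

/-- Generators of `G_cd`: `0 = c₁`, `1 = c₂`, `2 = d₁`, `3 = d₂`.
The relators are `cᵢ⁻¹ d_j cᵢ D_{ij}⁻¹` for `1 ≤ i,j ≤ 2`, where
`D_{ij} = (d₁d₂^{r(2i+j)+1})(d₁d₂^{r(2i+j)+2})⋯(d₁d₂^{r(2i+j)+r})`. -/
def cdRels (r : ℕ) : Set (FreeGroup (Fin 4)) :=
  { w | ∃ i j : Fin 2,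
      w = (FreeGroup.of (⟨i.val, by omega⟩ : Fin 4))⁻¹ *
          FreeGroup.of (⟨j.val + 2, by omega⟩ : Fin 4) *
          FreeGroup.of (⟨i.val, by omega⟩ : Fin 4) *
          (wordProg (FreeGroup.of (2 : Fin 4)) (FreeGroup.of (3 : Fin 4))
            (r * (2 * (i.val + 1) + (j.val + 1))) r)⁻¹ }

/-- `G_cd = ⟨c₁,c₂,d₁,d₂ ∣ cᵢ⁻¹d_jcᵢ = D_{ij}, 1 ≤ i,j ≤ 2⟩`. -/
abbrev Gcd (r : ℕ) := PresentedGroup (cdRels r)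

/-!
Sending `d₁, d₂` to `1` and `c₁, c₂` to the free generators of `F(c₁, c₂)` respects the
relations, since every `D_{ij}` is a word in `d₁, d₂`. This retraction of `G_cd` kills `d`
and maps the element to `c₁^{r₀} c₂^{s₁} c₁^{r₁} ⋯ c₂^{s_n} c₁^{r_{n+1}}`, which is a
freely reduced word (once a vanishing `r₀` or `r_{n+1}` is dropped) containing `c₂^{s_n}`,
hence nontrivial.
-/

section AlternatingWord

variable {G H : Type*} [Group G] [Group H]

def alternatingWord (a b : G) (rr s : ℕ → ℤ) (n : ℕ) : G :=
  a ^ rr 0 * ((List.range (n - 1)).map fun i => b ^ s (i + 1) * a ^ rr (i + 1)).prod *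
    b ^ s n * a ^ rr (n + 1)

theorem map_alternatingWord (f : G →* H) (a b : G) (rr s : ℕ → ℤ) (n : ℕ) :
    f (alternatingWord a b rr s n) = alternatingWord (f a) (f b) rr s n := by
  simp [alternatingWord, map_list_prod, Function.comp_def]

end AlternatingWord

namespace FreeGroup

variable {α : Type*} [DecidableEq α]

theorem toWord_of_zpow (a : α) (k : ℤ) :
    (of a ^ k).toWord = List.replicate k.natAbs (a, decide (0 ≤ k)) := by
  rcases k with n | n
  · simp [toWord_of_pow]
  · rw [zpow_negSucc, toWord_inv, toWord_of_pow]
    simp [invRev, Int.natAbs_negSucc]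

def firstLetter (w : FreeGroup α) : Option α := w.toWord.head?.map Prod.fst

theorem ne_one_of_firstLetter_eq_some {w : FreeGroup α} {x : α} (h : w.firstLetter = some x) :
    w ≠ 1 := by
  rintro rfl
  simp [firstLetter] at h

theorem firstLetter_of_zpow_mul {x : α} {k : ℤ} (hk : k ≠ 0) {w : FreeGroup α}
    (hw : w.firstLetter ≠ some x) : (of x ^ k * w).firstLetter = some x := by
  have hred : IsReduced (List.replicate k.natAbs (x, decide (0 ≤ k)) ++ w.toWord) := by
    refine List.isChain_append.2 ⟨List.isChain_replicate_of_rel _ fun _ => rfl, isReduced_toWord,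
      fun a ha b hb hab => absurd ?_ hw⟩
    obtain rfl := List.eq_of_mem_replicate (List.mem_of_mem_getLast? ha)
    simp [firstLetter, Option.mem_def.1 hb, ← hab]
  obtain ⟨m, hm⟩ := Nat.exists_eq_succ_of_ne_zero (Int.natAbs_ne_zero.2 hk)
  rw [firstLetter, toWord_mul, toWord_of_zpow, hred.reduce_eq, hm]
  rfl

theorem firstLetter_of_zpow_ne {x y : α} (hxy : x ≠ y) (k : ℤ) :
    (of x ^ k).firstLetter ≠ some y := by
  rcases eq_or_ne k 0 with rfl | hk
  · simp [firstLetter]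
  · have h := firstLetter_of_zpow_mul (x := x) hk (w := 1) (by simp [firstLetter])
    rw [mul_one] at h
    simpa [h] using hxy

theorem of_zpow_mul_ne_one {x : α} (k : ℤ) {w : FreeGroup α} (hw1 : w ≠ 1)
    (hw : w.firstLetter ≠ some x) : of x ^ k * w ≠ 1 := by
  rcases eq_or_ne k 0 with rfl | hk
  · simpa using hw1
  · exact ne_one_of_firstLetter_eq_some (firstLetter_of_zpow_mul hk hw)

variable {x y : α}

theorem firstLetter_alternatingProd_mul (hxy : x ≠ y) (rr s : ℕ → ℤ) (m : ℕ)
    (hs : ∀ i, 1 ≤ i → i ≤ m → s i ≠ 0) (hrr : ∀ i, 1 ≤ i → i ≤ m → rr i ≠ 0)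
    {w : FreeGroup α} (hw : w.firstLetter = some y) :
    (((List.range m).map fun i => of y ^ s (i + 1) * of x ^ rr (i + 1)).prod * w).firstLetter =
      some y := by
  induction m generalizing w with
  | zero => simpa using hw
  | succ m ih =>
    have hx : (of x ^ rr (m + 1) * w).firstLetter = some x :=
      firstLetter_of_zpow_mul (hrr _ m.succ_pos le_rfl) (by simpa [hw] using hxy.symm)
    have hy : (of y ^ s (m + 1) * (of x ^ rr (m + 1) * w)).firstLetter = some y :=
      firstLetter_of_zpow_mul (hs _ m.succ_pos le_rfl) (by simpa [hx] using hxy)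
    rw [List.range_succ, List.map_append, List.prod_append, List.map_singleton,
      List.prod_singleton, mul_assoc, mul_assoc]
    exact ih (fun i h1 h2 => hs i h1 (by omega)) (fun i h1 h2 => hrr i h1 (by omega)) hy

theorem alternatingWord_ne_one (hxy : x ≠ y) (rr s : ℕ → ℤ) {n : ℕ} (hn : 1 ≤ n)
    (hs : ∀ i, 1 ≤ i → i ≤ n → s i ≠ 0) (hrr : ∀ i, 1 ≤ i → i ≤ n - 1 → rr i ≠ 0) :
    alternatingWord (of x) (of y) rr s n ≠ 1 := by
  have htail : (of y ^ s n * of x ^ rr (n + 1)).firstLetter = some y :=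
    firstLetter_of_zpow_mul (hs n hn le_rfl) (firstLetter_of_zpow_ne hxy _)
  have hbody := firstLetter_alternatingProd_mul hxy rr s (n - 1)
    (fun i h1 h2 => hs i h1 (by omega)) hrr htail
  rw [alternatingWord, mul_assoc, mul_assoc]
  exact of_zpow_mul_ne_one _ (ne_one_of_firstLetter_eq_some hbody)
    (by rw [hbody]; simpa using hxy.symm)

end FreeGroup

theorem map_wordProg {G H : Type*} [Group G] [Group H] (f : G →* H) (x y : G) (s r : ℕ) :
    f (wordProg x y s r) = wordProg (f x) (f y) s r := by
  simp [wordProg, map_list_prod, Function.comp_def]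

theorem wordProg_one_one {G : Type*} [Group G] (s r : ℕ) : wordProg (1 : G) 1 s r = 1 := by
  simp [wordProg]

namespace Gcd

open FreeGroup hiding map_mul map_inv

def killDGens : Fin 4 → FreeGroup (Fin 2) := ![of 0, of 1, 1, 1]

theorem lift_killDGens_eq_one (r : ℕ) : ∀ w ∈ cdRels r, lift killDGens w = 1 := by
  rintro _ ⟨i, j, rfl⟩
  have hd : ∀ j : Fin 2, killDGens ⟨j + 2, by omega⟩ = 1 := by
    intro j; fin_cases j <;> rfl
  simp only [map_mul, map_inv, lift_apply_of, map_wordProg, hd j, wordProg_one_one,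
    show killDGens 2 = 1 from rfl, show killDGens 3 = 1 from rfl]
  group

def killD (r : ℕ) : Gcd r →* FreeGroup (Fin 2) := PresentedGroup.toGroup (lift_killDGens_eq_one r)

theorem killD_of (r : ℕ) (x : Fin 4) : killD r (PresentedGroup.of x) = killDGens x :=
  PresentedGroup.toGroup.of _

theorem killD_eq_one_of_mem_range {r : ℕ} {d : Gcd r}
    (hd : d ∈ (lift fun j : Fin 2 =>
      (PresentedGroup.of (⟨j.val + 2, by omega⟩ : Fin 4) : Gcd r)).range) :
    killD r d = 1 := by
  obtain ⟨w, rfl⟩ := hd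
  rw [← MonoidHom.comp_apply, show (killD r).comp (lift _) = 1 from ext_hom _ _ fun j => by
    fin_cases j <;> simp [killD_of, killDGens]]
  rfl

end Gcd

/-- Fix `r ≥ 1` and `n ≥ 1`.  If `d` is a nonidentity element of the image of
`F(d₁,d₂) → G_cd`, and `r₀,…,r_{n+1}, s₁,…,s_n` are integers with `s₁,…,s_n` and
`r₁,…,r_{n−1}` nonzero, then
`d·c₁^{r₀}·(∏_{i=1}^{n−1} c₂^{sᵢ}c₁^{rᵢ})·c₂^{s_n}·c₁^{r_{n+1}} ≠ 1` in `G_cd`. -/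
theorem britton_pattern_nontrivial_in_Gcd (r : ℕ) (n : ℕ) (hn : 1 ≤ n)
    (d : Gcd r)
    (hd : d ∈ (FreeGroup.lift (fun j : Fin 2 =>
      (PresentedGroup.of (⟨j.val + 2, by omega⟩ : Fin 4) : Gcd r))).range)
    (rr s : ℕ → ℤ)
    (hs : ∀ i, 1 ≤ i → i ≤ n → s i ≠ 0)
    (hrr : ∀ i, 1 ≤ i → i ≤ n - 1 → rr i ≠ 0) :
    d * (PresentedGroup.of (0 : Fin 4) : Gcd r) ^ (rr 0) *
      ((List.range (n - 1)).map (fun i =>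
        (PresentedGroup.of (1 : Fin 4) : Gcd r) ^ (s (i + 1)) *
        (PresentedGroup.of (0 : Fin 4) : Gcd r) ^ (rr (i + 1)))).prod *
      (PresentedGroup.of (1 : Fin 4) : Gcd r) ^ (s n) *
      (PresentedGroup.of (0 : Fin 4) : Gcd r) ^ (rr (n + 1)) ≠ 1 := by
  intro h
  have hw : d * alternatingWord (PresentedGroup.of 0) (PresentedGroup.of 1) rr s n = 1 := by
    simpa only [alternatingWord, mul_assoc] using h
  refine FreeGroup.alternatingWord_ne_one (x := (0 : Fin 2)) (y := 1) (by decide) rr s hn hs hrr ?_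
  simpa [map_alternatingWord, Gcd.killD_eq_one_of_mem_range hd, Gcd.killD_of, Gcd.killDGens]
    using congrArg (Gcd.killD r) hw
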